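/- Let (E,μ) be a measure space and Φ₀, Φ₁, Φ₂ Young functions satisfying Φ₀(t₁t₂) ≤ Φ₁(t₁) + Φ₂(t₂) for all t₁, t₂ ≥ 0. Then for f₁ ∈ L^{Φ₁}(μ) and f₂ ∈ L^{Φ₂}(μ), the product f₁f₂ ∈ L^{Φ₀}(μ) and ‖f₁f₂‖_{L^{Φ₀}} ≤ 2‖f₁‖_{L^{Φ₁}}‖f₂‖_{L^{Φ₂}}. -/

import Mathlib

open MeasureTheory
open scoped NNReal ENNReal

/-- The Luxemburg norm `‖f‖_{L^Φ(μ)} = inf{ c > 0 : ∫ Φ(|f|/c) dμ ≤ 1 }`. -/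
noncomputable def orliczNorm {α : Type*} [MeasurableSpace α] (Φ : ℝ≥0∞ → ℝ≥0∞)
    (μ : Measure α) (f : α → ℂ) : ℝ≥0∞ :=
  sInf {c : ℝ≥0∞ | c ≠ 0 ∧ ∫⁻ x, Φ ((‖f x‖₊ : ℝ≥0∞) / c) ∂μ ≤ 1}

/-!
If `c₁, c₂` are admissible scales for `f₁, f₂`, the pointwise bound
`Φ₀ (|f₁ f₂| / (c₁ c₂)) ≤ Φ₁ (|f₁| / c₁) + Φ₂ (|f₂| / c₂)` makes the `Φ₀`-modular of `f₁ f₂` at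
scale `c₁ c₂` at most `2`. Convexity and `Φ₀ 0 = 0` give `Φ₀ (t / 2) ≤ Φ₀ t / 2`, so `2 c₁ c₂` is an
admissible scale for `f₁ f₂`; letting `c₁, c₂` decrease to the two norms gives the bound.
-/

open Set

namespace ConvexOn

variable {Φ : ℝ≥0∞ → ℝ≥0∞}

lemma map_mul_le_mul_of_map_zero (hΦ : ConvexOn ℝ≥0 univ Φ) (h0 : Φ 0 = 0) {s : ℝ≥0}
    (hs : s ≤ 1) (t : ℝ≥0∞) : Φ (s * t) ≤ s * Φ t := by
  simpa [h0, ENNReal.smul_def] using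
    hΦ.2 (mem_univ t) (mem_univ 0) bot_le bot_le (add_tsub_cancel_of_le hs)

lemma monotone_of_map_zero_of_map_top (hΦ : ConvexOn ℝ≥0 univ Φ) (h0 : Φ 0 = 0)
    (htop : Φ ⊤ = ⊤) : Monotone Φ := by
  intro t₁ t₂ h
  rcases eq_or_ne t₂ ⊤ with rfl | h₂
  · simp [htop]
  lift t₂ to ℝ≥0 using h₂
  lift t₁ to ℝ≥0 using ne_top_of_le_ne_top ENNReal.coe_ne_top h
  rcases eq_or_ne t₂ 0 with rfl | h₂0
  · simp_all
  have hs : t₁ / t₂ ≤ 1 := div_le_one_of_le₀ (mod_cast h) t₂.2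
  calc Φ t₁ = Φ ((t₁ / t₂ : ℝ≥0) * t₂) := by rw [← ENNReal.coe_mul, div_mul_cancel₀ _ h₂0]
    _ ≤ (t₁ / t₂ : ℝ≥0) * Φ t₂ := hΦ.map_mul_le_mul_of_map_zero h0 hs _
    _ ≤ Φ t₂ := mul_le_of_le_one_left' (mod_cast hs)

end ConvexOn

section Orlicz

variable {α : Type*} [MeasurableSpace α] {μ : Measure α}

lemma orliczNorm_le {Φ : ℝ≥0∞ → ℝ≥0∞} {f : α → ℂ} {c : ℝ≥0∞} (hc : c ≠ 0)
    (h : ∫⁻ x, Φ (‖f x‖₊ / c) ∂μ ≤ 1) : orliczNorm Φ μ f ≤ c :=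
  sInf_le ⟨hc, h⟩

lemma exists_lt_of_orliczNorm_lt {Φ : ℝ≥0∞ → ℝ≥0∞} {f : α → ℂ} {c : ℝ≥0∞}
    (h : orliczNorm Φ μ f < c) : ∃ d < c, d ≠ 0 ∧ ∫⁻ x, Φ (‖f x‖₊ / d) ∂μ ≤ 1 := by
  obtain ⟨d, ⟨hd0, hd⟩, hdc⟩ := sInf_lt_iff.mp h
  exact ⟨d, hdc, hd0, hd⟩

variable {Φ₀ Φ₁ Φ₂ : ℝ≥0∞ → ℝ≥0∞} {f₁ f₂ : α → ℂ}

lemma lintegral_map_norm_mul_div_le (hprod : ∀ t₁ t₂, Φ₀ (t₁ * t₂) ≤ Φ₁ t₁ + Φ₂ t₂)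
    (hΦ₁ : Measurable Φ₁) (hf₁ : AEMeasurable f₁ μ) {c₁ c₂ : ℝ≥0∞} (hc₁ : c₁ ≠ ⊤)
    (hc₂ : c₂ ≠ ⊤) :
    ∫⁻ x, Φ₀ (‖f₁ x * f₂ x‖₊ / (c₁ * c₂)) ∂μ ≤
      ∫⁻ x, Φ₁ (‖f₁ x‖₊ / c₁) ∂μ + ∫⁻ x, Φ₂ (‖f₂ x‖₊ / c₂) ∂μ := by
  have hm : AEMeasurable (fun x => Φ₁ (‖f₁ x‖₊ / c₁)) μ :=
    hΦ₁.comp_aemeasurable (hf₁.nnnorm.coe_nnreal_ennreal.div_const _)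
  refine (lintegral_mono fun x => ?_).trans_eq (lintegral_add_left' hm _)
  rw [nnnorm_mul, ENNReal.coe_mul, ENNReal.mul_div_mul_comm (.inr hc₂) (.inl hc₁)]
  exact hprod _ _

lemma orliczNorm_mul_le_of_lintegral_le_one (hΦ₀ : ConvexOn ℝ≥0 univ Φ₀) (h0 : Φ₀ 0 = 0)
    (hprod : ∀ t₁ t₂, Φ₀ (t₁ * t₂) ≤ Φ₁ t₁ + Φ₂ t₂) (hΦ₁ : Measurable Φ₁)
    (hf₁ : AEMeasurable f₁ μ) {c₁ c₂ : ℝ≥0∞} (hc₁0 : c₁ ≠ 0) (hc₁ : c₁ ≠ ⊤) (hc₂0 : c₂ ≠ 0)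
    (hc₂ : c₂ ≠ ⊤) (h₁ : ∫⁻ x, Φ₁ (‖f₁ x‖₊ / c₁) ∂μ ≤ 1)
    (h₂ : ∫⁻ x, Φ₂ (‖f₂ x‖₊ / c₂) ∂μ ≤ 1) :
    orliczNorm Φ₀ μ (fun x => f₁ x * f₂ x) ≤ 2 * (c₁ * c₂) := by
  refine orliczNorm_le (by positivity) ?_
  have half : ((2⁻¹ : ℝ≥0) : ℝ≥0∞) = 2⁻¹ := by simp
  calc ∫⁻ x, Φ₀ (‖f₁ x * f₂ x‖₊ / (2 * (c₁ * c₂))) ∂μ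
      = ∫⁻ x, Φ₀ ((2⁻¹ : ℝ≥0) * (‖f₁ x * f₂ x‖₊ / (c₁ * c₂))) ∂μ := by
        simp_rw [half, div_eq_mul_inv,
          ENNReal.mul_inv (.inl two_ne_zero) (.inl ENNReal.ofNat_ne_top), mul_left_comm]
    _ ≤ ∫⁻ x, 2⁻¹ * Φ₀ (‖f₁ x * f₂ x‖₊ / (c₁ * c₂)) ∂μ := by
        refine lintegral_mono fun x => ?_
        rw [← half]
        exact hΦ₀.map_mul_le_mul_of_map_zero h0 (by norm_num) _
    _ = 2⁻¹ * ∫⁻ x, Φ₀ (‖f₁ x * f₂ x‖₊ / (c₁ * c₂)) ∂μ := lintegral_const_mul' _ _ (by simp)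
    _ ≤ 2⁻¹ * (1 + 1) := by
        gcongr
        exact (lintegral_map_norm_mul_div_le hprod hΦ₁ hf₁ hc₁ hc₂).trans (add_le_add h₁ h₂)
    _ = 1 := by rw [one_add_one_eq_two, ENNReal.inv_mul_cancel two_ne_zero ENNReal.ofNat_ne_top]

lemma orliczNorm_mul_le_two_mul (hΦ₀ : ConvexOn ℝ≥0 univ Φ₀) (h0 : Φ₀ 0 = 0)
    (hprod : ∀ t₁ t₂, Φ₀ (t₁ * t₂) ≤ Φ₁ t₁ + Φ₂ t₂) (hΦ₁ : Measurable Φ₁)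
    (hf₁ : AEMeasurable f₁ μ) (hN₁ : orliczNorm Φ₁ μ f₁ ≠ ⊤) (hN₂ : orliczNorm Φ₂ μ f₂ ≠ ⊤) :
    orliczNorm Φ₀ μ (fun x => f₁ x * f₂ x) ≤
      2 * orliczNorm Φ₁ μ f₁ * orliczNorm Φ₂ μ f₂ := by
  rw [mul_assoc, mul_comm, ← ENNReal.div_le_iff two_ne_zero ENNReal.ofNat_ne_top]
  refine ENNReal.le_mul_of_forall_lt (.inr hN₂) (.inl hN₁) fun c₁ hc₁ c₂ hc₂ => ?_
  obtain ⟨d₁, hd₁c, hd₁0, hd₁⟩ := exists_lt_of_orliczNorm_lt hc₁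
  obtain ⟨d₂, hd₂c, hd₂0, hd₂⟩ := exists_lt_of_orliczNorm_lt hc₂
  refine ENNReal.div_le_of_le_mul' ?_
  calc orliczNorm Φ₀ μ (fun x => f₁ x * f₂ x)
      ≤ 2 * (d₁ * d₂) :=
        orliczNorm_mul_le_of_lintegral_le_one hΦ₀ h0 hprod hΦ₁ hf₁ hd₁0 hd₁c.ne_top hd₂0
          hd₂c.ne_top hd₁ hd₂
    _ ≤ 2 * (c₁ * c₂) := by gcongr

end Orlicz

theorem orlicz_holder_general {α : Type*} [MeasurableSpace α] (μ : Measure α)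
    (Φ₀ Φ₁ Φ₂ : ℝ≥0∞ → ℝ≥0∞)
    (hconv : ∀ j ∈ [Φ₀, Φ₁, Φ₂], ∀ (s₁ s₂ : ℝ≥0) (t₁ t₂ : ℝ≥0∞), s₁ + s₂ = 1 →
      j (s₁ • t₁ + s₂ • t₂) ≤ s₁ • j t₁ + s₂ • j t₂)
    (hzero : ∀ j ∈ [Φ₀, Φ₁, Φ₂], j 0 = 0)
    (htop : ∀ j ∈ [Φ₀, Φ₁, Φ₂], j ⊤ = ⊤)
    (hprod : ∀ t₁ t₂ : ℝ≥0∞, Φ₀ (t₁ * t₂) ≤ Φ₁ t₁ + Φ₂ t₂)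
    (f₁ f₂ : α → ℂ) (hm₁ : AEMeasurable f₁ μ)
    (hf₁ : orliczNorm Φ₁ μ f₁ ≠ ⊤) (hf₂ : orliczNorm Φ₂ μ f₂ ≠ ⊤) :
    orliczNorm Φ₀ μ (fun x => f₁ x * f₂ x) ≤
      2 * orliczNorm Φ₁ μ f₁ * orliczNorm Φ₂ μ f₂ := by
  have convex : ∀ j ∈ [Φ₀, Φ₁, Φ₂], ConvexOn ℝ≥0 univ j := fun j hj =>
    ⟨convex_univ, fun t₁ _ t₂ _ s₁ s₂ _ _ hs => hconv j hj s₁ s₂ t₁ t₂ hs⟩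
  have hΦ₁ : Monotone Φ₁ := (convex Φ₁ (by simp)).monotone_of_map_zero_of_map_top
    (hzero Φ₁ (by simp)) (htop Φ₁ (by simp))
  exact orliczNorm_mul_le_two_mul (convex Φ₀ (by simp))
    (hzero Φ₀ (by simp)) hprod hΦ₁.measurable hm₁ hf₁ hf₂

/-- Hölder's inequality for Orlicz spaces: if `Φ₀(t₁t₂) ≤ Φ₁(t₁) + Φ₂(t₂)` for Young
functions `Φ₀, Φ₁, Φ₂`, then `‖f₁f₂‖_{L^{Φ₀}} ≤ 2‖f₁‖_{L^{Φ₁}}‖f₂‖_{L^{Φ₂}}`. -/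
theorem orlicz_holder {α : Type*} [MeasurableSpace α] (μ : Measure α)
    (Φ₀ Φ₁ Φ₂ : ℝ≥0∞ → ℝ≥0∞)
    (hconv : ∀ j ∈ [Φ₀, Φ₁, Φ₂], ∀ (s₁ s₂ : ℝ≥0) (t₁ t₂ : ℝ≥0∞), s₁ + s₂ = 1 →
      j (s₁ • t₁ + s₂ • t₂) ≤ s₁ • j t₁ + s₂ • j t₂)
    (hzero : ∀ j ∈ [Φ₀, Φ₁, Φ₂], j 0 = 0)
    (htop : ∀ j ∈ [Φ₀, Φ₁, Φ₂], j ⊤ = ⊤)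
    (hprod : ∀ t₁ t₂ : ℝ≥0∞, Φ₀ (t₁ * t₂) ≤ Φ₁ t₁ + Φ₂ t₂)
    (f₁ f₂ : α → ℂ) (hm₁ : AEMeasurable f₁ μ) (hm₂ : AEMeasurable f₂ μ)
    (hf₁ : orliczNorm Φ₁ μ f₁ ≠ ⊤) (hf₂ : orliczNorm Φ₂ μ f₂ ≠ ⊤) :
    orliczNorm Φ₀ μ (fun x => f₁ x * f₂ x) ≤
      2 * orliczNorm Φ₁ μ f₁ * orliczNorm Φ₂ μ f₂ :=
  orlicz_holder_general μ Φ₀ Φ₁ Φ₂ hconv hzero htop hprod f₁ f₂ hm₁ hf₁ hf₂
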